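/- arXiv:2101.03830 — 2 statements merged into one kernel-verified Lean document; each statement's English description precedes it below -/
import Mathlib

section
/- Let H : E × E → ℝ be of class C¹ and S : E → ℝ of class C², and suppose the function q ↦ H(q, ∇S q) is constant on E (the Hamilton–Jacobi equation). Then for every curve γ : ℝ → E satisfying γ'(t) = ∇_pH(γ t, ∇S (γ t)) for all t (i.e. γ is an integral curve of the vector field associated with dS), the lifted curve ζ(t) := (γ t, ∇S (γ t)) solves Hamilton's equations: at every t, ζ has derivative (∇_pH(ζ t), −∇_qH(ζ t)). -/
/-!
Differentiating the Hamilton–Jacobi equation `H (q, ∇S q) = const` in the direction `v` gives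
`∂_qH (v) + ∂_pH (D(∇S) v) = 0`. The derivative `D(∇S)` is the Hessian of `S`, hence self-adjoint,
so this says `D(∇S) (∇_pH) = -∇_qH`. By the chain rule, `D(∇S) (γ')` is the derivative of the
momentum component `∇S ∘ γ` of the lift, and `γ' = ∇_pH` along an integral curve.
-/

open scoped Gradient

/-- The gradient at `q` of the partial map `q' ↦ H (q', p)`. -/
noncomputable def gradQ {n : ℕ}
    (H : EuclideanSpace ℝ (Fin n) × EuclideanSpace ℝ (Fin n) → ℝ)
    (q p : EuclideanSpace ℝ (Fin n)) : EuclideanSpace ℝ (Fin n) :=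
  ∇ (fun q' => H (q', p)) q

/-- The gradient at `p` of the partial map `p' ↦ H (q, p')`. -/
noncomputable def gradP {n : ℕ}
    (H : EuclideanSpace ℝ (Fin n) × EuclideanSpace ℝ (Fin n) → ℝ)
    (q p : EuclideanSpace ℝ (Fin n)) : EuclideanSpace ℝ (Fin n) :=
  ∇ (fun p' => H (q, p')) p

open scoped RealInnerProductSpace
open InnerProductSpace

section PartialGradient

variable {E F : Type*} [NormedAddCommGroup E] [InnerProductSpace ℝ E]
  [NormedAddCommGroup F] [InnerProductSpace ℝ F] {H : E × F → ℝ} {q : E} {p : F}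

theorem inner_gradient_comp_prodMk_left [CompleteSpace E]
    (hH : DifferentiableAt ℝ H (q, p)) (v : E) :
    ⟪∇ (fun q' => H (q', p)) q, v⟫ = fderiv ℝ H (q, p) (v, 0) := by
  rw [inner_gradient_left]
  exact congrArg (· v) (hH.hasFDerivAt.comp q (hasFDerivAt_prodMk_left (𝕜 := ℝ) q p)).fderiv

theorem inner_gradient_comp_prodMk_right [CompleteSpace F]
    (hH : DifferentiableAt ℝ H (q, p)) (w : F) :
    ⟪∇ (fun p' => H (q, p')) p, w⟫ = fderiv ℝ H (q, p) (0, w) := by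
  rw [inner_gradient_left]
  exact congrArg (· w) (hH.hasFDerivAt.comp p (hasFDerivAt_prodMk_right q p)).fderiv

end PartialGradient

variable {E : Type*} [NormedAddCommGroup E] [InnerProductSpace ℝ E] [CompleteSpace E]

theorem inner_fderiv_gradient_apply (S : E → ℝ) (x v w : E) :
    ⟪fderiv ℝ (∇ S) x v, w⟫ = fderiv ℝ (fderiv ℝ S) x v w := by
  change ⟪fderiv ℝ ((toDual ℝ E).symm ∘ fderiv ℝ S) x v, w⟫ = _
  rw [LinearIsometryEquiv.comp_fderiv]
  exact toDual_symm_apply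

theorem ContDiffAt.differentiableAt_gradient {S : E → ℝ} {x : E} (hS : ContDiffAt ℝ 2 S x) :
    DifferentiableAt ℝ (∇ S) x :=
  (toDual ℝ E).symm.differentiableAt.comp x
    ((hS.fderiv_right (m := 1) le_rfl).differentiableAt one_ne_zero)

theorem ContDiffAt.inner_fderiv_gradient_comm {S : E → ℝ} {x : E} (hS : ContDiffAt ℝ 2 S x)
    (v w : E) : ⟪fderiv ℝ (∇ S) x v, w⟫ = ⟪v, fderiv ℝ (∇ S) x w⟫ := by
  rw [real_inner_comm _ v, inner_fderiv_gradient_apply, inner_fderiv_gradient_apply,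
    hS.isSymmSndFDerivAt (by simp)]

theorem ContDiffAt.fderiv_gradient_apply_gradient_right_eq_neg_of_fderiv_eq_zero
    {H : E × E → ℝ} {S : E → ℝ} {q : E}
    (hH : DifferentiableAt ℝ H (q, ∇ S q)) (hS : ContDiffAt ℝ 2 S q)
    (hcrit : fderiv ℝ (fun q' => H (q', ∇ S q')) q = 0) :
    fderiv ℝ (∇ S) q (∇ (fun p' => H (q, p')) (∇ S q)) = -∇ (fun q' => H (q', ∇ S q)) q := by
  set A := fderiv ℝ (∇ S) q
  set D := fderiv ℝ H (q, ∇ S q)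
  have hchain : D.comp ((ContinuousLinearMap.id ℝ E).prod A) = 0 :=
    (hH.hasFDerivAt.comp q
      ((hasFDerivAt_id q).prodMk hS.differentiableAt_gradient.hasFDerivAt)).fderiv.symm.trans hcrit
  have hD (v : E) : D (v, 0) + D (0, A v) = 0 := by
    rw [← map_add, Prod.mk_add_mk, add_zero, zero_add]
    exact congrArg (· v) hchain
  refine ext_inner_right ℝ fun v => ?_
  rw [hS.inner_fderiv_gradient_comm, inner_gradient_comp_prodMk_right hH,
    inner_neg_left, inner_gradient_comp_prodMk_left hH]
  linarith [hD v]

/-- If `S` solves the Hamilton–Jacobi equation `H (q, ∇S q) = const`, then any integral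
curve `γ` of the vector field `q ↦ ∇ₚH (q, ∇S q)` lifts to a curve
`ζ t = (γ t, ∇S (γ t))` solving Hamilton's equations. -/
theorem lifted_curve_solves_hamilton_of_HJ {n : ℕ}
    (H : EuclideanSpace ℝ (Fin n) × EuclideanSpace ℝ (Fin n) → ℝ)
    (hH : ContDiff ℝ 1 H)
    (S : EuclideanSpace ℝ (Fin n) → ℝ) (hS : ContDiff ℝ 2 S)
    (hHJ : ∀ q q', H (q, ∇ S q) = H (q', ∇ S q'))
    (γ : ℝ → EuclideanSpace ℝ (Fin n))
    (hγ : ∀ t, HasDerivAt γ (gradP H (γ t) (∇ S (γ t))) t) :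
    ∀ t, HasDerivAt (fun s => ((γ s, ∇ S (γ s)) : EuclideanSpace ℝ (Fin n) × EuclideanSpace ℝ (Fin n)))
      (gradP H (γ t) (∇ S (γ t)), -gradQ H (γ t) (∇ S (γ t))) t := by
  intro t
  have hconst : fderiv ℝ (fun q => H (q, ∇ S q)) (γ t) = 0 := by
    rw [funext fun q => hHJ q (γ t), fderiv_const_apply]
  have hflow := hS.contDiffAt.fderiv_gradient_apply_gradient_right_eq_neg_of_fderiv_eq_zero
    (hH.differentiable one_ne_zero _) hconst
  refine (hγ t).prodMk ?_
  rw [gradQ, ← hflow]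
  exact hS.contDiffAt.differentiableAt_gradient.hasFDerivAt.comp_hasDerivAt t (hγ t)
end

section
/- Let H : E × E → ℝ be differentiable, F := EuclideanSpace ℝ (Fin m), α : F → E × E with differentiable components a := Prod.fst ∘ α and b := Prod.snd ∘ α, and X : F → F. Assume (α, X) solves the slicing equation: for all x, fderiv a x (X x) = ∇_pH(α x) and fderiv b x (X x) = −∇_qH(α x); and assume α is isotropic (α*ω = 0): ⟪fderiv a x u, fderiv b x v⟫ = ⟪fderiv a x v, fderiv b x u⟫ for all x, u, v. Then d(α*H) = 0, i.e. the function H ∘ α : F → ℝ has zero Fréchet derivative at every point of F. -/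
open scoped Gradient RealInnerProductSpace

/-! The chain rule gives `d(H ∘ α) u = ⟪∇_qH, a' u⟫ + ⟪∇_pH, b' u⟫`. Substituting the slicing
equation `∇_pH = a' X`, `∇_qH = -b' X` turns this into `ω(α_* X, α_* u)`, which
vanishes because `α` is isotropic. -/

theorem fderiv_comp_apply_eq_fderiv_apply_prod {E F G K : Type*}
    [NormedAddCommGroup E] [NormedSpace ℝ E] [NormedAddCommGroup F] [NormedSpace ℝ F]
    [NormedAddCommGroup G] [NormedSpace ℝ G] [NormedAddCommGroup K] [NormedSpace ℝ K]
    {H : F × G → K} {α : E → F × G} {x : E} (hH : DifferentiableAt ℝ H (α x))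
    (ha : DifferentiableAt ℝ (fun x' => (α x').1) x)
    (hb : DifferentiableAt ℝ (fun x' => (α x').2) x) (u : E) :
    fderiv ℝ (H ∘ α) x u =
      fderiv ℝ H (α x) (fderiv ℝ (fun x' => (α x').1) x u, fderiv ℝ (fun x' => (α x').2) x u) := by
  rw [fderiv_comp x hH (ha.prodMk hb), ContinuousLinearMap.comp_apply]
  exact congrArg (fun L => fderiv ℝ H (α x) (L u)) (ha.fderiv_prodMk hb)

theorem fderiv_apply_prod_eq_inner_gradient_add {F G : Type*}
    [NormedAddCommGroup F] [InnerProductSpace ℝ F] [CompleteSpace F]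
    [NormedAddCommGroup G] [InnerProductSpace ℝ G] [CompleteSpace G]
    {H : F × G → ℝ} {q : F} {p : G} (hH : DifferentiableAt ℝ H (q, p)) (u : F) (v : G) :
    fderiv ℝ H (q, p) (u, v) =
      ⟪∇ (fun q' => H (q', p)) q, u⟫ + ⟪∇ (fun p' => H (q, p')) p, v⟫ := by
  have hq : HasFDerivAt (fun q' => H (q', p)) _ q :=
    hH.hasFDerivAt.comp q (hasFDerivAt_prodMk_left (𝕜 := ℝ) q p)
  have hp : HasFDerivAt (fun p' => H (q, p')) _ p :=
    hH.hasFDerivAt.comp p (hasFDerivAt_prodMk_right (𝕜 := ℝ) q p)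
  rw [inner_gradient_left, inner_gradient_left, hq.fderiv, hp.fderiv,
    ContinuousLinearMap.comp_apply, ContinuousLinearMap.comp_apply, ContinuousLinearMap.inl_apply,
    ContinuousLinearMap.inr_apply, ← map_add, Prod.mk_add_mk, add_zero, zero_add]

/-- If `(α, X)` solves the slicing equation for the Hamiltonian vector field of `H` and `α`
is isotropic (`α*ω = 0`), then `d(α*H) = 0`: the pullback `H ∘ α` has zero Fréchet
derivative at every point. -/
theorem slicing_isotropic_implies_pullback_locally_constant {n m : ℕ}
    (H : EuclideanSpace ℝ (Fin n) × EuclideanSpace ℝ (Fin n) → ℝ)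
    (hH : Differentiable ℝ H)
    (α : EuclideanSpace ℝ (Fin m) → EuclideanSpace ℝ (Fin n) × EuclideanSpace ℝ (Fin n))
    (ha : Differentiable ℝ (fun x => (α x).1)) (hb : Differentiable ℝ (fun x => (α x).2))
    (X : EuclideanSpace ℝ (Fin m) → EuclideanSpace ℝ (Fin m))
    (hslice : ∀ x, fderiv ℝ (fun x' => (α x').1) x (X x) = gradP H (α x).1 (α x).2 ∧
      fderiv ℝ (fun x' => (α x').2) x (X x) = - gradQ H (α x).1 (α x).2)
    (hiso : ∀ x u v, ⟪fderiv ℝ (fun x' => (α x').1) x u, fderiv ℝ (fun x' => (α x').2) x v⟫ =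
      ⟪fderiv ℝ (fun x' => (α x').1) x v, fderiv ℝ (fun x' => (α x').2) x u⟫) :
    ∀ x, fderiv ℝ (H ∘ α) x = 0 := by
  intro x
  ext1 u
  obtain ⟨hgradP, hgradQ⟩ := hslice x
  have hgradQ' : gradQ H (α x).1 (α x).2 = -fderiv ℝ (fun x' => (α x').2) x (X x) := by
    rw [hgradQ, neg_neg]
  calc fderiv ℝ (H ∘ α) x u
      = ⟪gradQ H (α x).1 (α x).2, fderiv ℝ (fun x' => (α x').1) x u⟫ +
          ⟪gradP H (α x).1 (α x).2, fderiv ℝ (fun x' => (α x').2) x u⟫ :=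
        (fderiv_comp_apply_eq_fderiv_apply_prod (hH _) (ha x) (hb x) u).trans
          (fderiv_apply_prod_eq_inner_gradient_add (hH _) _ _)
    _ = ⟪fderiv ℝ (fun x' => (α x').1) x (X x), fderiv ℝ (fun x' => (α x').2) x u⟫ -
          ⟪fderiv ℝ (fun x' => (α x').1) x u, fderiv ℝ (fun x' => (α x').2) x (X x)⟫ := by
        rw [hgradQ', ← hgradP, inner_neg_left, real_inner_comm (fderiv ℝ _ x u)]
        ring
    _ = 0 := by rw [hiso x u (X x), sub_self]
end
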